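/- Under the RIC condition δ_{k₀} < 1 of order k₀ for X, if the support estimate S' ⊊ S is a strict subset of the true support S of a k₀-sparse vector β, then ‖(I - P_{S'})Xβ‖₂ ≥ √(1 - δ_{k₀}) · β_min, where β_min = min_{j∈S} |β_j| and P_{S'} projects onto span(X_{S'}). -/

import Mathlib

/-- A vector `b ∈ ℝᵖ` is `j`-sparse if it has at most `j` nonzero entries. -/
def Sparse {p : ℕ} (j : ℕ) (b : Fin p → ℝ) : Prop :=
  (Finset.univ.filter fun i => b i ≠ 0).card ≤ j

/-- `δ` is the restricted isometry constant of order `j` of `X`: the smallest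
`δ ≥ 0` with `(1-δ)‖b‖² ≤ ‖Xb‖² ≤ (1+δ)‖b‖²` for all `j`-sparse `b`. -/
def IsRIC {n p : ℕ} (X : Matrix (Fin n) (Fin p) ℝ) (j : ℕ) (δ : ℝ) : Prop :=
  IsLeast {d : ℝ | 0 ≤ d ∧ ∀ b : Fin p → ℝ, Sparse j b →
    (1 - d) * (∑ i, b i ^ 2) ≤ (∑ r, X.mulVec b r ^ 2) ∧
      (∑ r, X.mulVec b r ^ 2) ≤ (1 + d) * (∑ i, b i ^ 2)} δ

open Matrix

variable {n p : ℕ}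

lemma Sparse.of_support_subset {j : ℕ} {b : Fin p → ℝ} {S : Finset (Fin p)}
    (hb : ∀ i, b i ≠ 0 → i ∈ S) (hS : S.card ≤ j) : Sparse j b :=
  (Finset.card_le_card fun i hi => hb i (Finset.mem_filter.mp hi).2).trans hS

lemma Matrix.exists_mulVec_eq_of_mem_span_cols (X : Matrix (Fin n) (Fin p) ℝ)
    {T : Finset (Fin p)} {w : EuclideanSpace ℝ (Fin n)}
    (hw : w ∈ Submodule.span ℝ ((fun i => WithLp.toLp 2 fun r => X r i) '' ↑T)) :
    ∃ c : Fin p → ℝ, (∀ i ∉ T, c i = 0) ∧ w = WithLp.toLp 2 (X *ᵥ c) := by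
  induction hw using Submodule.span_induction with
  | mem _ hx =>
    obtain ⟨i, hi, rfl⟩ := hx
    refine ⟨Pi.single i 1, fun j hj => Pi.single_eq_of_ne (by rintro rfl; exact hj hi) 1, ?_⟩
    rw [mulVec_single_one]
    rfl
  | zero => exact ⟨0, fun _ _ => rfl, by simp⟩
  | add _ _ _ _ hx hy =>
    obtain ⟨c₁, hc₁, rfl⟩ := hx
    obtain ⟨c₂, hc₂, rfl⟩ := hy
    exact ⟨c₁ + c₂, fun i hi => by simp [hc₁ i hi, hc₂ i hi], by simp [mulVec_add]⟩
  | smul a _ _ hx =>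
    obtain ⟨c, hc, rfl⟩ := hx
    exact ⟨a • c, fun i hi => by simp [hc i hi], by simp [mulVec_smul]⟩

lemma EuclideanSpace.norm_toLp_eq_sqrt_sum_sq {ι : Type*} [Fintype ι] (u : ι → ℝ) :
    ‖(WithLp.toLp 2 u : EuclideanSpace ℝ ι)‖ = √(∑ i, u i ^ 2) := by
  rw [← EuclideanSpace.real_norm_sq_eq, Real.sqrt_sq (norm_nonneg _)]

lemma IsRIC.sqrt_one_sub_mul_abs_le_norm_mulVec {X : Matrix (Fin n) (Fin p) ℝ} {j : ℕ}
    {δ : ℝ} (hδ : IsRIC X j δ) {b : Fin p → ℝ} (hb : Sparse j b) (i : Fin p) :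
    √(1 - δ) * |b i| ≤ ‖(WithLp.toLp 2 (X *ᵥ b) : EuclideanSpace ℝ (Fin n))‖ := by
  have hbi : |b i| ≤ √(∑ k, b k ^ 2) :=
    Real.abs_le_sqrt (Finset.single_le_sum (fun k _ => sq_nonneg (b k)) (Finset.mem_univ i))
  calc √(1 - δ) * |b i|
      ≤ √(1 - δ) * √(∑ k, b k ^ 2) := by gcongr
    _ = √((1 - δ) * ∑ k, b k ^ 2) := (Real.sqrt_mul' _ (by positivity)).symm
    _ ≤ √(∑ r, (X *ᵥ b) r ^ 2) := Real.sqrt_le_sqrt (hδ.1.2 b hb).1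
    _ = _ := (EuclideanSpace.norm_toLp_eq_sqrt_sum_sq _).symm

theorem stmt_11_general {n p : ℕ} (X : Matrix (Fin n) (Fin p) ℝ) (k₀ : ℕ) (δ : ℝ)
    (hδ : IsRIC X k₀ δ)
    (β : Fin p → ℝ) (S : Finset (Fin p))
    (hS : S = Finset.univ.filter fun i => β i ≠ 0)
    (hk₀ : S.card = k₀)
    (S' : Finset (Fin p)) (hss : S' ⊂ S) (hSne : S.Nonempty) :
    letI K : Submodule ℝ (EuclideanSpace ℝ (Fin n)) :=
      Submodule.span ℝ
        ((fun i : Fin p => (show EuclideanSpace ℝ (Fin n) from WithLp.toLp 2 fun r => X r i)) '' ↑S')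
    letI v : EuclideanSpace ℝ (Fin n) := show _ from WithLp.toLp 2 (X.mulVec β)
    Real.sqrt (1 - δ) * S.inf' hSne (fun j => |β j|) ≤
      ‖v - (K.orthogonalProjectionOnto v : EuclideanSpace ℝ (Fin n))‖ := by
  dsimp only
  set v : EuclideanSpace ℝ (Fin n) := WithLp.toLp 2 (X *ᵥ β)
  set K : Submodule ℝ (EuclideanSpace ℝ (Fin n)) :=
    Submodule.span ℝ ((fun i => WithLp.toLp 2 fun r => X r i) '' ↑S')
  obtain ⟨j₀, hj₀S, hj₀S'⟩ := Finset.exists_of_ssubset hss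
  -- Only membership of the projection in `K` matters: it is `X c` with `c` supported on `S'`,
  -- so the residual is `X (β - c)`, where `β - c` is supported on `S` and equals `β` at `j₀ ∉ S'`.
  obtain ⟨c, hc, hPv⟩ := X.exists_mulVec_eq_of_mem_span_cols (K.orthogonalProjectionOnto v).2
  have hres : v - (K.orthogonalProjectionOnto v : EuclideanSpace ℝ (Fin n)) =
      WithLp.toLp 2 (X *ᵥ (β - c)) := by
    rw [hPv, mulVec_sub]
    rfl
  have hsparse : Sparse k₀ (β - c) := by
    refine Sparse.of_support_subset (fun i hi => ?_) hk₀.le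
    by_contra hiS
    have hβi : β i = 0 := by simpa [hS] using hiS
    simp [hβi, hc i fun h => hiS (hss.1 h)] at hi
  calc √(1 - δ) * S.inf' hSne (fun j => |β j|)
      ≤ √(1 - δ) * |(β - c) j₀| := by
        rw [Pi.sub_apply, hc j₀ hj₀S', sub_zero]
        gcongr
        exact Finset.inf'_le _ hj₀S
    _ ≤ _ := hres ▸ hδ.sqrt_one_sub_mul_abs_le_norm_mulVec hsparse j₀

/-- Under the RIC condition `δ_{k₀} < 1` for `X`, if a support estimate
`S' ⊊ S` is a strict subset of the true support `S` of the `k₀`-sparse vector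
`β`, then `‖(I - P_{S'})Xβ‖₂ ≥ √(1 - δ_{k₀}) · β_min`, where
`β_min = min_{j ∈ S} |β_j|` and `P_{S'}` is the orthogonal projection onto the
span of the columns of `X` indexed by `S'`. -/
theorem stmt_11 {n p : ℕ} (X : Matrix (Fin n) (Fin p) ℝ) (k₀ : ℕ) (δ : ℝ)
    (hδ : IsRIC X k₀ δ) (hδ1 : δ < 1)
    (β : Fin p → ℝ) (S : Finset (Fin p))
    (hS : S = Finset.univ.filter fun i => β i ≠ 0)
    (hk₀ : S.card = k₀)
    (S' : Finset (Fin p)) (hss : S' ⊂ S) (hSne : S.Nonempty) :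
    letI K : Submodule ℝ (EuclideanSpace ℝ (Fin n)) :=
      Submodule.span ℝ
        ((fun i : Fin p => (show EuclideanSpace ℝ (Fin n) from WithLp.toLp 2 fun r => X r i)) '' ↑S')
    letI v : EuclideanSpace ℝ (Fin n) := show _ from WithLp.toLp 2 (X.mulVec β)
    Real.sqrt (1 - δ) * S.inf' hSne (fun j => |β j|) ≤
      ‖v - (K.orthogonalProjectionOnto v : EuclideanSpace ℝ (Fin n))‖ :=
  stmt_11_general X k₀ δ hδ β S hS hk₀ S' hss hSne
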